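/- Let p be a prime and let k and N be positive integers. For any integer n ≥ N, the sum of poly-Bernoulli numbers over one period satisfies Σ_{i=0}^{φ(p^N)-1} B_{n+i}^{(-k)} ≡ 0 (mod p^N). -/

import Mathlib

open Finset

/-- Stirling numbers of the second kind. -/
def stirling2 : ℕ → ℕ → ℕ
  | 0, 0 => 1
  | 0, _ + 1 => 0
  | _ + 1, 0 => 0
  | n + 1, m + 1 => (m + 1) * stirling2 n (m + 1) + stirling2 n m

/-- The poly-Bernoulli number `B_n^{(-k)}` with negative upper index `-k`. -/
def polyBernoulliB (k n : ℕ) : ℤ :=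
  (-1 : ℤ) ^ n * ∑ m ∈ Finset.range (n + 1),
    (-1 : ℤ) ^ m * (m.factorial : ℤ) * (stirling2 n m : ℤ) * ((m : ℤ) + 1) ^ k

/-- The poly-Bernoulli number of type C, `C_n^{(-k)}`, with negative upper index `-k`. -/
def polyBernoulliC (k n : ℕ) : ℤ :=
  (-1 : ℤ) ^ n * ∑ m ∈ Finset.range (n + 1),
    (-1 : ℤ) ^ m * (m.factorial : ℤ) * (stirling2 (n + 1) (m + 1) : ℤ) * ((m : ℤ) + 1) ^ k

lemma stirling2_succ (n m : ℕ) :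
    stirling2 (n+1) (m+1) = (m + 1) * stirling2 n (m + 1) + stirling2 n m := rfl

lemma stirling2_succ_zero (n : ℕ) : stirling2 (n+1) 0 = 0 := rfl

lemma stirling2_zero_succ (m : ℕ) : stirling2 0 (m+1) = 0 := rfl

lemma stirling2_eq_zero : ∀ n m, n < m → stirling2 n m = 0
  | 0, m+1, _ => rfl
  | n+1, m+1, h => by
      rw [stirling2_succ, stirling2_eq_zero n (m+1) (by omega),
        stirling2_eq_zero n m (by omega)]
      ring

lemma neg_one_pow_congr' {a b : ℕ} (h : a % 2 = b % 2) : ((-1:ℤ))^a = (-1)^b := by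
  rcases Nat.even_or_odd a with ha | ha
  · have hb : Even b := Nat.even_iff.mpr (by have := Nat.even_iff.mp ha; omega)
    rw [ha.neg_one_pow, hb.neg_one_pow]
  · have hb : Odd b := Nat.odd_iff.mpr (by have := Nat.odd_iff.mp ha; omega)
    rw [ha.neg_one_pow, hb.neg_one_pow]

lemma prod_geom (A : ℕ) (x : ℤ) :
    ∀ B, ∑ i ∈ range (A*B), x^i = (∑ a ∈ range B, (x^A)^a) * (∑ j ∈ range A, x^j) := by
  intro B
  induction B with
  | zero => simp
  | succ B ih =>
      rw [Nat.mul_succ, Finset.sum_range_add, ih, Finset.sum_range_succ, add_mul]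
      congr 1
      rw [Finset.mul_sum]
      refine Finset.sum_congr rfl fun j _ => ?_
      rw [pow_add, pow_mul]

lemma geo_dvd (p : ℕ) : ∀ (c : ℕ) (x : ℤ), (p:ℤ) ∣ x - 1 → ∀ M : ℕ,
    (p:ℤ)^c ∣ ∑ i ∈ range (p^c * M), x^i := by
  intro c
  induction c with
  | zero => intro x _ M; simp
  | succ c ih =>
      intro x hx M
      have h1 : p^(c+1) * M = p * (p^c * M) := by ring
      rw [h1, prod_geom, pow_succ]
      have hxp : (p:ℤ) ∣ x^p - 1 := hx.trans (by simpa using sub_dvd_pow_sub_pow x 1 p)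
      refine mul_dvd_mul (ih (x^p) hxp M) ?_
      have : (∑ j ∈ range p, x^j) = (∑ j ∈ range p, (x^j - 1)) + p := by
        rw [Finset.sum_sub_distrib]; simp
      rw [this]
      exact dvd_add (Finset.dvd_sum fun j _ => hx.trans (by simpa using sub_dvd_pow_sub_pow x 1 j)) ⟨1, by ring⟩

lemma lemB : ∀ k m, (∑ j ∈ range (k+1),
    (-1:ℤ)^(k+j) * (k.choose j : ℤ) * (stirling2 (j+1) (m+1) : ℤ)) = (stirling2 k m : ℤ) := by
  intro k
  induction k with
  | zero =>
      intro m
      simp [stirling2_succ, stirling2_zero_succ]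
  | succ k ih =>
      intro m
      have hf : ∀ j ∈ range (k+1),
          (-1:ℤ)^(k+1+(j+1)) * (((k+1).choose (j+1) : ℕ) : ℤ) * (stirling2 (j+1+1) (m+1) : ℤ)
          = (-1:ℤ)^(k+j) * (k.choose (j+1) : ℤ) * (stirling2 (j+2) (m+1) : ℤ)
            + ((m:ℤ)+1) * ((-1:ℤ)^(k+j) * (k.choose j : ℤ) * (stirling2 (j+1) (m+1) : ℤ))
            + (-1:ℤ)^(k+j) * (k.choose j : ℤ) * (stirling2 (j+1) m : ℤ) := by
        intro j _
        have h1 : (((k+1).choose (j+1) : ℕ) : ℤ) = (k.choose j : ℤ) + (k.choose (j+1) : ℤ) := by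
          exact_mod_cast Nat.choose_succ_succ k j
        have h2 : (stirling2 (j+1+1) (m+1) : ℤ)
            = ((m:ℤ)+1) * (stirling2 (j+1) (m+1) : ℤ) + (stirling2 (j+1) m : ℤ) := by
          rw [stirling2_succ]; push_cast; ring
        have h3 : (-1:ℤ)^(k+1+(j+1)) = (-1:ℤ)^(k+j) := by
          rw [show k+1+(j+1) = k+j+2 by ring, pow_add]; ring
        rw [h1, h3, h2]; ring
      rw [Finset.sum_range_succ' (fun j => (-1:ℤ)^(k+1+j) * (((k+1).choose j : ℕ) : ℤ)
            * (stirling2 (j+1) (m+1) : ℤ)) (k+1)]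
      rw [Finset.sum_congr rfl hf, Finset.sum_add_distrib, Finset.sum_add_distrib,
        ← Finset.mul_sum, ih m]
      -- remaining : (ΣA + (m+1)*S(k,m) + ΣC) + f0 = S(k+1,m)
      have hA : (∑ j ∈ range (k+1), (-1:ℤ)^(k+j) * (k.choose (j+1) : ℤ) * (stirling2 (j+2) (m+1) : ℤ))
          = -(stirling2 k m : ℤ) - (-1:ℤ)^(k+1) * (stirling2 1 (m+1) : ℤ) := by
        have hlast : (-1:ℤ)^(k+k) * (k.choose (k+1) : ℤ) * (stirling2 (k+2) (m+1) : ℤ) = 0 := by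
          simp [Nat.choose_succ_self]
        rw [Finset.sum_range_succ, hlast, add_zero]
        have hkey : ∀ j ∈ range k, (-1:ℤ)^(k+j) * (k.choose (j+1) : ℤ) * (stirling2 (j+2) (m+1) : ℤ)
            = -((-1:ℤ)^(k+(j+1)) * (k.choose (j+1) : ℤ) * (stirling2 ((j+1)+1) (m+1) : ℤ)) := by
          intro j _
          rw [show k+(j+1) = (k+j)+1 by ring, pow_succ]; ring
        rw [Finset.sum_congr rfl hkey, Finset.sum_neg_distrib]
        have := Finset.sum_range_succ' (fun j => (-1:ℤ)^(k+j) * (k.choose j : ℤ)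
            * (stirling2 (j+1) (m+1) : ℤ)) k
        rw [ih m] at this
        have h0 : (-1:ℤ)^(k+0) * (k.choose 0 : ℤ) * (stirling2 (0+1) (m+1) : ℤ)
            = (-1:ℤ)^k * (stirling2 1 (m+1) : ℤ) := by simp
        rw [h0] at this
        have : (∑ j ∈ range k, (-1:ℤ)^(k+(j+1)) * (k.choose (j+1) : ℤ) * (stirling2 (j+1+1) (m+1) : ℤ))
            = (stirling2 k m : ℤ) - (-1:ℤ)^k * (stirling2 1 (m+1) : ℤ) := by linarith [this]
        rw [this, pow_succ]; ring
      rw [hA]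
      rcases m with _ | m'
      · have hC : (∑ j ∈ range (k+1), (-1:ℤ)^(k+j) * (k.choose j : ℤ) * (stirling2 (j+1) 0 : ℤ)) = 0 :=
          Finset.sum_eq_zero fun j _ => by simp [stirling2_succ_zero]
        rw [hC]
        simp only [stirling2_succ_zero, Nat.choose_zero_right, stirling2_succ, stirling2_zero_succ]
        push_cast
        ring
      · have hC := ih m'
        rw [hC, stirling2_succ k m']
        simp only [Nat.choose_zero_right, Nat.zero_add]
        push_cast
        ring

lemma lemC : ∀ k, (∑ m ∈ range (k+1),
    (-1:ℤ)^(k+m) * (Nat.factorial m : ℤ) * (stirling2 k m : ℤ)) = 1 := by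
  intro k
  induction k with
  | zero => simp [stirling2]
  | succ k ih =>
      rw [Finset.sum_range_succ' (fun m => (-1:ℤ)^(k+1+m) * (Nat.factorial m : ℤ)
            * (stirling2 (k+1) m : ℤ)) (k+1)]
      have hf : ∀ m ∈ range (k+1),
          (-1:ℤ)^(k+1+(m+1)) * (Nat.factorial (m+1) : ℤ) * (stirling2 (k+1) (m+1) : ℤ)
          = (-1:ℤ)^(k+m) * ((m:ℤ)+1) * (Nat.factorial (m+1) : ℤ) * (stirling2 k (m+1) : ℤ)
            + ((-1:ℤ)^(k+m) * (Nat.factorial m : ℤ) * (stirling2 k m : ℤ)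
               + (-1:ℤ)^(k+m) * ((m:ℤ)) * (Nat.factorial m : ℤ) * (stirling2 k m : ℤ)) := by
        intro m _
        have h2 : (stirling2 (k+1) (m+1) : ℤ)
            = ((m:ℤ)+1) * (stirling2 k (m+1) : ℤ) + (stirling2 k m : ℤ) := by
          rw [stirling2_succ]; push_cast; ring
        have h3 : (-1:ℤ)^(k+1+(m+1)) = (-1:ℤ)^(k+m) := by
          rw [show k+1+(m+1) = k+m+2 by ring, pow_add]; ring
        have h4 : (Nat.factorial (m+1) : ℤ) = ((m:ℤ)+1) * (Nat.factorial m : ℤ) := by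
          rw [Nat.factorial_succ]; push_cast; ring
        rw [h3, h2, h4]; ring
      rw [Finset.sum_congr rfl hf, Finset.sum_add_distrib, Finset.sum_add_distrib]
      have hX : (∑ m ∈ range (k+1), (-1:ℤ)^(k+m) * ((m:ℤ)+1) * (Nat.factorial (m+1) : ℤ)
            * (stirling2 k (m+1) : ℤ))
          = -(∑ m ∈ range (k+1), (-1:ℤ)^(k+m) * ((m:ℤ)) * (Nat.factorial m : ℤ)
            * (stirling2 k m : ℤ)) := by
        rw [Finset.sum_range_succ, stirling2_eq_zero k (k+1) (by omega)]
        rw [Finset.sum_range_succ' (fun m => (-1:ℤ)^(k+m) * ((m:ℤ)) * (Nat.factorial m : ℤ)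
              * (stirling2 k m : ℤ)) k]
        push_cast
        rw [neg_add, ← Finset.sum_neg_distrib]
        refine congrArg₂ (· + ·) (Finset.sum_congr rfl fun m _ => ?_) (by ring)
        rw [show k+(m+1) = (k+m)+1 by ring, pow_succ]
        push_cast; ring
      rw [hX]
      rw [stirling2_succ_zero]
      push_cast
      linarith [ih]

lemma lem_shift (K c : ℕ) (t : ℕ → ℤ) :
    (∑ m ∈ range (K+1), (-1:ℤ)^(c+m) * ((m:ℤ)+1) * (Nat.factorial (m+1):ℤ)
        * (stirling2 K (m+1):ℤ) * t (m+1))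
    = -(∑ m ∈ range (K+1), (-1:ℤ)^(c+m) * (m:ℤ) * (Nat.factorial m:ℤ)
        * (stirling2 K m:ℤ) * t m) := by
  rw [Finset.sum_range_succ, stirling2_eq_zero K (K+1) (by omega)]
  rw [Finset.sum_range_succ' (fun m => (-1:ℤ)^(c+m) * (m:ℤ) * (Nat.factorial m:ℤ)
        * (stirling2 K m:ℤ) * t m) K]
  rw [neg_add, ← Finset.sum_neg_distrib]
  refine congrArg₂ (· + ·) (Finset.sum_congr rfl fun m _ => ?_) (by push_cast; ring)
  rw [show c+(m+1) = (c+m)+1 by ring, pow_succ]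
  push_cast; ring

lemma lem_b (K n : ℕ) :
    (∑ m ∈ range (K+2), (-1:ℤ)^(K+1+m) * (Nat.factorial m:ℤ) * (stirling2 (K+1) m:ℤ)
        * ((m:ℤ)+1)^n)
    = -(∑ m ∈ range (K+1), (-1:ℤ)^(K+m) * (m:ℤ) * (Nat.factorial m:ℤ) * (stirling2 K m:ℤ)
        * ((m:ℤ)+1)^n)
      + ∑ m ∈ range (K+1), (-1:ℤ)^(K+m) * (Nat.factorial (m+1):ℤ) * (stirling2 K m:ℤ)
        * ((m:ℤ)+2)^n := by
  rw [Finset.sum_range_succ' (fun m => (-1:ℤ)^(K+1+m) * (Nat.factorial m:ℤ)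
        * (stirling2 (K+1) m:ℤ) * ((m:ℤ)+1)^n) (K+1)]
  have hf : ∀ m ∈ range (K+1),
      (-1:ℤ)^(K+1+(m+1)) * (Nat.factorial (m+1):ℤ) * (stirling2 (K+1) (m+1):ℤ)
          * ((((m+1):ℕ):ℤ)+1)^n
      = (-1:ℤ)^(K+m) * ((m:ℤ)+1) * (Nat.factorial (m+1):ℤ) * (stirling2 K (m+1):ℤ)
          * ((fun m : ℕ => ((m:ℤ)+1)^n) (m+1))
        + (-1:ℤ)^(K+m) * (Nat.factorial (m+1):ℤ) * (stirling2 K m:ℤ) * ((m:ℤ)+2)^n := by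
    intro m _
    have h2 : (stirling2 (K+1) (m+1) : ℤ)
        = ((m:ℤ)+1) * (stirling2 K (m+1) : ℤ) + (stirling2 K m : ℤ) := by
      rw [stirling2_succ]; push_cast; ring
    have h3 : (-1:ℤ)^(K+1+(m+1)) = (-1:ℤ)^(K+m) := neg_one_pow_congr' (by omega)
    rw [h3, h2]
    push_cast; ring
  rw [Finset.sum_congr rfl hf, Finset.sum_add_distrib, lem_shift K K (fun m => ((m:ℤ)+1)^n)]
  simp [stirling2_succ_zero]

lemma lem_a (k n : ℕ) :
    (∑ j ∈ range (k+1), (k.choose j : ℤ) * ∑ m ∈ range (j+2),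
        (-1:ℤ)^(j+1+m) * (Nat.factorial m:ℤ) * (stirling2 (j+1) m:ℤ) * ((m:ℤ)+1)^n)
    = ∑ m ∈ range (k+1), (-1:ℤ)^(k+m) * (Nat.factorial (m+1):ℤ) * (stirling2 k m:ℤ)
        * ((m:ℤ)+2)^n := by
  have hext : ∀ j ∈ range (k+1),
      (k.choose j : ℤ) * (∑ m ∈ range (j+2),
          (-1:ℤ)^(j+1+m) * (Nat.factorial m:ℤ) * (stirling2 (j+1) m:ℤ) * ((m:ℤ)+1)^n)
      = ∑ m ∈ range (k+2),
          (k.choose j : ℤ) * ((-1:ℤ)^(j+1+m) * (Nat.factorial m:ℤ) * (stirling2 (j+1) m:ℤ)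
            * ((m:ℤ)+1)^n) := by
    intro j hj
    rw [Finset.mul_sum]
    refine Finset.sum_subset ?_ ?_
    · exact Finset.range_subset_range.mpr (by simp at hj; omega)
    · intro m _ hm
      simp only [Finset.mem_range, not_lt] at hm
      rw [stirling2_eq_zero (j+1) m (by omega)]
      ring
  rw [Finset.sum_congr rfl hext, Finset.sum_comm]
  rw [Finset.sum_range_succ' (fun m => ∑ j ∈ range (k+1),
        (k.choose j : ℤ) * ((-1:ℤ)^(j+1+m) * (Nat.factorial m:ℤ) * (stirling2 (j+1) m:ℤ)
          * ((m:ℤ)+1)^n)) (k+1)]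
  have h0 : (∑ j ∈ range (k+1),
      (k.choose j : ℤ) * ((-1:ℤ)^(j+1+0) * (Nat.factorial 0:ℤ) * (stirling2 (j+1) 0:ℤ)
        * (((0:ℕ):ℤ)+1)^n)) = 0 :=
    Finset.sum_eq_zero fun j _ => by simp [stirling2_succ_zero]
  rw [h0, add_zero]
  refine Finset.sum_congr rfl fun m _ => ?_
  have hin : ∀ j ∈ range (k+1),
      (k.choose j : ℤ) * ((-1:ℤ)^(j+1+(m+1)) * (Nat.factorial (m+1):ℤ)
        * (stirling2 (j+1) (m+1):ℤ) * ((((m+1):ℕ):ℤ)+1)^n)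
      = ((-1:ℤ)^(k+m) * (Nat.factorial (m+1):ℤ) * ((m:ℤ)+2)^n)
        * ((-1:ℤ)^(k+j) * (k.choose j : ℤ) * (stirling2 (j+1) (m+1):ℤ)) := by
    intro j _
    have h3 : (-1:ℤ)^(j+1+(m+1)) = (-1:ℤ)^(k+m) * (-1:ℤ)^(k+j) := by
      rw [← pow_add]; exact neg_one_pow_congr' (by omega)
    rw [h3]; push_cast; ring
  rw [Finset.sum_congr rfl hin, ← Finset.mul_sum, lemB k m]
  ring

lemma dual : ∀ n k, (∑ m ∈ range (n+1),
      (-1:ℤ)^(n+m) * (Nat.factorial m:ℤ) * (stirling2 n m:ℤ) * ((m:ℤ)+1)^k)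
    = ∑ m ∈ range (k+1),
      (-1:ℤ)^(k+m) * (Nat.factorial m:ℤ) * (stirling2 k m:ℤ) * ((m:ℤ)+1)^n := by
  intro n
  induction n with
  | zero =>
      intro k
      have hc : (∑ m ∈ range (k+1),
          (-1:ℤ)^(k+m) * (Nat.factorial m : ℤ) * (stirling2 k m : ℤ)) = 1 := lemC k
      calc (∑ m ∈ range 1, (-1:ℤ)^(0+m) * (Nat.factorial m:ℤ) * (stirling2 0 m:ℤ) * ((m:ℤ)+1)^k)
          = 1 := by simp [stirling2]
        _ = ∑ m ∈ range (k+1), (-1:ℤ)^(k+m) * (Nat.factorial m:ℤ) * (stirling2 k m:ℤ)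
              * ((m:ℤ)+1)^0 := by
            have h2 : (∑ m ∈ range (k+1), (-1:ℤ)^(k+m) * (Nat.factorial m:ℤ)
                * (stirling2 k m:ℤ) * ((m:ℤ)+1)^0)
                = ∑ m ∈ range (k+1), (-1:ℤ)^(k+m) * (Nat.factorial m:ℤ) * (stirling2 k m:ℤ) :=
              Finset.sum_congr rfl fun m _ => by rw [pow_zero, mul_one]
            rw [h2, hc]
  | succ n ih =>
      intro k
      rw [lem_b n k]
      have hbin : ∀ m ∈ range (n+1),
          (-1:ℤ)^(n+m) * (Nat.factorial (m+1):ℤ) * (stirling2 n m:ℤ) * ((m:ℤ)+2)^k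
          = ∑ j ∈ range (k+1), (k.choose j : ℤ)
              * ((-1:ℤ)^(n+m) * (Nat.factorial m:ℤ) * (stirling2 n m:ℤ) * ((m:ℤ)+1)^(j+1)) := by
        intro m _
        have hb2 : ((m:ℤ)+1+1)^k = ∑ j ∈ range (k+1), ((m:ℤ)+1)^j * (k.choose j : ℤ) := by
          simpa using add_pow ((m:ℤ)+1) 1 k
        rw [show ((m:ℤ)+2)^k = ((m:ℤ)+1+1)^k from by ring, hb2, Finset.mul_sum]
        refine Finset.sum_congr rfl fun j _ => ?_
        rw [pow_succ, Nat.factorial_succ]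
        push_cast; ring
      have e2 : (∑ m ∈ range (n+1),
            (-1:ℤ)^(n+m) * (Nat.factorial (m+1):ℤ) * (stirling2 n m:ℤ) * ((m:ℤ)+2)^k)
          = ∑ m ∈ range (k+1), (-1:ℤ)^(k+m) * (Nat.factorial (m+1):ℤ) * (stirling2 k m:ℤ)
              * ((m:ℤ)+2)^n := by
        rw [Finset.sum_congr rfl hbin, Finset.sum_comm]
        have hj : ∀ j ∈ range (k+1),
            (∑ m ∈ range (n+1), (k.choose j : ℤ)
              * ((-1:ℤ)^(n+m) * (Nat.factorial m:ℤ) * (stirling2 n m:ℤ) * ((m:ℤ)+1)^(j+1)))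
            = (k.choose j : ℤ) * ∑ m ∈ range (j+2),
              (-1:ℤ)^(j+1+m) * (Nat.factorial m:ℤ) * (stirling2 (j+1) m:ℤ) * ((m:ℤ)+1)^n := by
          intro j _
          rw [← Finset.mul_sum]
          exact congrArg _ (ih (j+1))
        rw [Finset.sum_congr rfl hj]
        exact lem_a k n
      have e1 : (∑ m ∈ range (n+1),
            (-1:ℤ)^(n+m) * (m:ℤ) * (Nat.factorial m:ℤ) * (stirling2 n m:ℤ) * ((m:ℤ)+1)^k)
          = (∑ m ∈ range (k+2),
              (-1:ℤ)^(k+1+m) * (Nat.factorial m:ℤ) * (stirling2 (k+1) m:ℤ) * ((m:ℤ)+1)^n)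
            - ∑ m ∈ range (k+1),
              (-1:ℤ)^(k+m) * (Nat.factorial m:ℤ) * (stirling2 k m:ℤ) * ((m:ℤ)+1)^n := by
        have hp : ∀ m ∈ range (n+1),
            (-1:ℤ)^(n+m) * (m:ℤ) * (Nat.factorial m:ℤ) * (stirling2 n m:ℤ) * ((m:ℤ)+1)^k
            = (-1:ℤ)^(n+m) * (Nat.factorial m:ℤ) * (stirling2 n m:ℤ) * ((m:ℤ)+1)^(k+1)
              - (-1:ℤ)^(n+m) * (Nat.factorial m:ℤ) * (stirling2 n m:ℤ) * ((m:ℤ)+1)^k := by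
          intro m _
          rw [pow_succ]; ring
        rw [Finset.sum_congr rfl hp, Finset.sum_sub_distrib, ih (k+1), ih k]
      rw [e1, e2, lem_b k n]
      have hfin : (∑ m ∈ range (k+1),
            (-1:ℤ)^(k+m) * (m:ℤ) * (Nat.factorial m:ℤ) * (stirling2 k m:ℤ) * ((m:ℤ)+1)^n)
          + (∑ m ∈ range (k+1),
            (-1:ℤ)^(k+m) * (Nat.factorial m:ℤ) * (stirling2 k m:ℤ) * ((m:ℤ)+1)^n)
          = ∑ m ∈ range (k+1),
            (-1:ℤ)^(k+m) * (Nat.factorial m:ℤ) * (stirling2 k m:ℤ) * ((m:ℤ)+1)^(n+1) := by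
        rw [← Finset.sum_add_distrib]
        refine Finset.sum_congr rfl fun m _ => ?_
        rw [pow_succ]; ring
      linear_combination hfin

theorem polyBernoulliB_sum_period_lower (p : ℕ) (hp : p.Prime) (k N : ℕ)
    (hk : 0 < k) (hN : 0 < N) (n : ℕ) (hn : N ≤ n) :
    (∑ i ∈ Finset.range (p ^ N).totient, polyBernoulliB k (n + i))
      ≡ 0 [ZMOD ((p : ℤ) ^ N)] := by
  rw [Int.modEq_zero_iff_dvd]
  have hrep : ∀ i, polyBernoulliB k (n+i)
      = ∑ m ∈ range (k+1), (-1:ℤ)^(k+m) * (Nat.factorial m:ℤ) * (stirling2 k m:ℤ)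
          * ((m:ℤ)+1)^(n+i) := by
    intro i
    rw [← dual (n+i) k, polyBernoulliB, Finset.mul_sum]
    exact Finset.sum_congr rfl fun m _ => by rw [pow_add]; ring
  have hsum : (∑ i ∈ Finset.range (p ^ N).totient, polyBernoulliB k (n+i))
      = ∑ m ∈ range (k+1), ((-1:ℤ)^(k+m) * (Nat.factorial m:ℤ) * (stirling2 k m:ℤ)
          * ((m:ℤ)+1)^n) * ∑ i ∈ range (p ^ N).totient, ((m:ℤ)+1)^i := by
    rw [Finset.sum_congr rfl (fun i _ => hrep i), Finset.sum_comm]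
    refine Finset.sum_congr rfl fun m _ => ?_
    rw [Finset.mul_sum]
    exact Finset.sum_congr rfl fun i _ => by rw [pow_add]; ring
  rw [hsum]
  refine Finset.dvd_sum fun m _ => ?_
  rcases m with _ | m
  · obtain ⟨k', rfl⟩ : ∃ k', k = k'+1 := ⟨k-1, by omega⟩
    simp [stirling2_succ_zero]
  · have hx : ((((m+1):ℕ):ℤ)+1) = ((m:ℤ)+2) := by push_cast; ring
    rw [hx]
    by_cases hp2 : p ∣ m+2
    · -- p divides m+2 : p^N divides (m+2)^n
      have h1 : ((p:ℤ))^N ∣ ((m:ℤ)+2)^n := by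
        have hd : (p:ℤ) ∣ ((m:ℤ)+2) := by exact_mod_cast Int.natCast_dvd_natCast.mpr hp2
        exact (pow_dvd_pow_of_dvd hd N).trans (pow_dvd_pow _ hn)
      calc ((p:ℤ))^N ∣ ((m:ℤ)+2)^n := h1
        _ ∣ _ := ⟨(-1:ℤ)^(k+(m+1)) * (Nat.factorial (m+1):ℤ) * (stirling2 k (m+1):ℤ)
              * ∑ i ∈ range (p ^ N).totient, ((m:ℤ)+2)^i, by ring⟩
    · by_cases hp1 : p ∣ m+1
      · -- p ∣ m+1 : use p ∣ (m+1)! and p^(N-1) ∣ geometric sum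
        have hf : (p:ℤ) ∣ (Nat.factorial (m+1) : ℤ) := by
          exact_mod_cast Int.natCast_dvd_natCast.mpr
            (Nat.dvd_factorial hp.pos (Nat.le_of_dvd (by omega) hp1))
        have hg : ((p:ℤ))^(N-1) ∣ ∑ i ∈ range (p ^ N).totient, ((m:ℤ)+2)^i := by
          have hT : (p ^ N).totient = p^(N-1) * (p-1) := Nat.totient_prime_pow hp hN
          rw [hT]
          refine geo_dvd p (N-1) ((m:ℤ)+2) ?_ (p-1)
          have : ((m:ℤ)+2) - 1 = ((m+1 : ℕ) : ℤ) := by push_cast; ring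
          rw [this]
          exact_mod_cast Int.natCast_dvd_natCast.mpr hp1
        have hpn : ((p:ℤ))^N = (p:ℤ) * ((p:ℤ))^(N-1) := by
          rw [← pow_succ']
          congr 1
          omega
        rw [hpn]
        obtain ⟨a, ha⟩ := hf
        obtain ⟨b, hb⟩ := hg
        exact ⟨(-1:ℤ)^(k+(m+1)) * a * (stirling2 k (m+1):ℤ) * ((m:ℤ)+2)^n * b,
          by rw [ha, hb]; ring⟩
      · -- p coprime to both m+1 and m+2 : Euler
        have hco2 : Nat.Coprime (m+2) (p^N) :=
          (Nat.coprime_comm.mp ((Nat.Prime.coprime_iff_not_dvd hp).mpr hp2)).pow_right N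
        have hE := Nat.ModEq.pow_totient hco2
        have hEd : ((p:ℤ))^N ∣ ((m:ℤ)+2)^((p ^ N).totient) - 1 := by
          have := (Nat.modEq_iff_dvd.mp hE.symm)
          push_cast at this ⊢
          convert this using 2 <;> push_cast <;> ring
        have hgeom := geom_sum_mul ((m:ℤ)+2) ((p ^ N).totient)
        have hd2 : ((p:ℤ))^N ∣ (∑ i ∈ range (p ^ N).totient, ((m:ℤ)+2)^i) * ((m+1 : ℕ) : ℤ) := by
          have : ((m:ℤ)+2) - 1 = ((m+1 : ℕ) : ℤ) := by push_cast; ring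
          rw [← this, hgeom]
          exact hEd
        have hcop : IsCoprime ((p:ℤ)^N) ((m+1 : ℕ) : ℤ) := by
          have h1 : Nat.Coprime (m+1) p := Nat.coprime_comm.mp
            ((Nat.Prime.coprime_iff_not_dvd hp).mpr hp1)
          exact ((Nat.isCoprime_iff_coprime.mpr h1).pow_right).symm
        have hG : ((p:ℤ))^N ∣ ∑ i ∈ range (p ^ N).totient, ((m:ℤ)+2)^i :=
          hcop.dvd_of_dvd_mul_right hd2
        obtain ⟨b, hb⟩ := hG
        exact ⟨(-1:ℤ)^(k+(m+1)) * (Nat.factorial (m+1):ℤ) * (stirling2 k (m+1):ℤ)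
            * ((m:ℤ)+2)^n * b, by rw [hb]; ring⟩
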